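/- arXiv:2202.12255 — 2 statements merged into one kernel-verified Lean document; each statement's English description precedes it below -/
import Mathlib

section
/- Fix a realization A ∈ {−1,0,1}^{n×n} (symmetric, zero diagonal) and suppose Assumption 1 holds with n large enough that n − (α⁺+α⁻)log n > 0, n − (β⁺+β⁻)log n > 0, μ_n > 0 and ν_n > 0, where μ_n = log(α⁺/β⁺) + log((n − (β⁺+β⁻)log n)/(n − (α⁺+α⁻)log n)) and ν_n = log(β⁻/α⁻) + log((n − (α⁺+α⁻)log n)/(n − (β⁺+β⁻)log n)). For x ∈ {1,−1}^n define the likelihood L(x) = ∏_{i<j} ℓ_ij(x), where ℓ_ij(x) equals p⁺, p⁻, or 1−p⁺−p⁻ according as A_ij = 1, −1, or 0 when x_i x_j = 1, and equals q⁺, q⁻, or 1−q⁺−q⁻ according as A_ij = 1, −1, or 0 when x_i x_j = −1. Then a vector x ∈ {1,−1}^n with 1ᵀx = 0 maximizes L over {x ∈ {1,−1}^n : 1ᵀx = 0} if and only if it maximizes the quadratic form xᵀ(μ_n A⁺ − ν_n A⁻)x over the same set. -/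
open Matrix

noncomputable section

def llfac {n : ℕ} (A : Matrix (Fin n) (Fin n) ℝ) (pp pm qp qm : ℝ)
    (x : Fin n → ℝ) (i j : Fin n) : ℝ :=
  open scoped Classical in
  if x i * x j = 1 then
    (if A i j = 1 then pp else if A i j = -1 then pm else 1 - pp - pm)
  else
    (if A i j = 1 then qp else if A i j = -1 then qm else 1 - qp - qm)

open scoped Classical in
def llhd {n : ℕ} (A : Matrix (Fin n) (Fin n) ℝ) (pp pm qp qm : ℝ)
    (x : Fin n → ℝ) : ℝ :=
  ∏ i, ∏ j, if i < j then llfac A pp pm qp qm x i j else 1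

def Pfac {n : ℕ} (A : Matrix (Fin n) (Fin n) ℝ) (u v : ℝ) (i j : Fin n) : ℝ :=
  open scoped Classical in
  if A i j = 1 then u else if A i j = -1 then v else 1 - u - v

lemma llfac_eq {n : ℕ} (A : Matrix (Fin n) (Fin n) ℝ) (pp pm qp qm : ℝ)
    (y : Fin n → ℝ) (i j : Fin n) :
    llfac A pp pm qp qm y i j =
      open scoped Classical in
      if y i * y j = 1 then Pfac A pp pm i j else Pfac A qp qm i j := rfl

lemma sum_tri_decomp {n : ℕ} (f : Fin n → Fin n → ℝ) :
    ∑ i, ∑ j, f i j =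
      (∑ i, ∑ j, if i < j then f i j else 0) +
      (∑ i, ∑ j, if j < i then f i j else 0) + ∑ i, f i i := by
  classical
  have key : ∀ i j : Fin n, f i j =
      (if i < j then f i j else 0) + (if j < i then f i j else 0) +
      (if i = j then f i j else 0) := by
    intro i j
    rcases lt_trichotomy i j with h | h | h
    · simp [h, h.asymm, h.ne]
    · subst h; simp
    · simp [h, h.asymm, h.ne']
  calc ∑ i, ∑ j, f i j
      = ∑ i, ∑ j, ((if i < j then f i j else 0) + (if j < i then f i j else 0) +
          (if i = j then f i j else 0)) :=
        Finset.sum_congr rfl fun i _ => Finset.sum_congr rfl fun j _ => key i j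
    _ = _ := by
        simp only [Finset.sum_add_distrib]
        congr 1
        refine Finset.sum_congr rfl fun i _ => ?_
        simp [Finset.sum_ite_eq]

lemma sum_lt_of_symm {n : ℕ} (f : Fin n → Fin n → ℝ)
    (hf : ∀ i j, f i j = f j i) (hd : ∀ i, f i i = 0) :
    ∑ i, ∑ j, f i j = 2 * ∑ i, ∑ j, if i < j then f i j else 0 := by
  classical
  have hT : (∑ i, ∑ j, if j < i then f i j else 0)
      = ∑ i, ∑ j, if i < j then f i j else 0 := by
    rw [Finset.sum_comm]
    exact Finset.sum_congr rfl fun i _ => Finset.sum_congr rfl fun j _ => by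
      split_ifs <;> simp [hf i j]
  rw [sum_tri_decomp f, hT]
  simp [hd]
  ring

lemma sum_ite_add {n : ℕ} (f g : Fin n → Fin n → ℝ) :
    (∑ i, ∑ j, if i < j then f i j + g i j else 0)
      = (∑ i, ∑ j, if i < j then f i j else 0)
        + (∑ i, ∑ j, if i < j then g i j else 0) := by
  classical
  rw [← Finset.sum_add_distrib]
  refine Finset.sum_congr rfl fun i _ => ?_
  rw [← Finset.sum_add_distrib]
  refine Finset.sum_congr rfl fun j _ => ?_
  split_ifs <;> simp

lemma sum_ite_mul {n : ℕ} (c : ℝ) (f : Fin n → Fin n → ℝ) :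
    (∑ i, ∑ j, if i < j then c * f i j else 0)
      = c * ∑ i, ∑ j, if i < j then f i j else 0 := by
  classical
  simp_rw [Finset.mul_sum]
  refine Finset.sum_congr rfl fun i _ => Finset.sum_congr rfl fun j _ => ?_
  split_ifs <;> simp

set_option maxHeartbeats 1000000 in
/-- Fix a symmetric `{-1,0,1}`-matrix `A` with zero diagonal and suppose Assumption 1 holds
(`p⁺ = α⁺ log n/n`, `p⁻ = α⁻ log n/n`, `q⁺ = β⁺ log n/n`, `q⁻ = β⁻ log n/n` with
`α⁺ > β⁺ > 0`, `β⁻ > α⁻ > 0`), with `n` large enough that `n − (α⁺+α⁻)log n > 0`,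
`n − (β⁺+β⁻)log n > 0`, `μ_n > 0` and `ν_n > 0`.  Then a vector `x ∈ {1,−1}ⁿ` with
`1ᵀx = 0` maximizes the likelihood `L` over `{x ∈ {1,−1}ⁿ : 1ᵀx = 0}` if and only if it
maximizes the quadratic form `xᵀ(μ_n A⁺ − ν_n A⁻)x` over the same set. -/
theorem stmt_0 (n : ℕ) (hn : 2 ≤ n) (αp βp αm βm : ℝ)
    (hβp : 0 < βp) (hαp : βp < αp) (hαm : 0 < αm) (hβm : αm < βm)
    (A : Matrix (Fin n) (Fin n) ℝ)
    (hsymm : ∀ i j, A i j = A j i) (hdiag : ∀ i, A i i = 0)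
    (hvals : ∀ i j, A i j = 1 ∨ A i j = -1 ∨ A i j = 0)
    (pp pm qp qm μn νn : ℝ)
    (hpp : pp = αp * Real.log n / n) (hpm : pm = αm * Real.log n / n)
    (hqp : qp = βp * Real.log n / n) (hqm : qm = βm * Real.log n / n)
    (hden1 : 0 < (n : ℝ) - (αp + αm) * Real.log n)
    (hden2 : 0 < (n : ℝ) - (βp + βm) * Real.log n)
    (hμn : μn = Real.log (αp / βp) +
      Real.log (((n : ℝ) - (βp + βm) * Real.log n) / ((n : ℝ) - (αp + αm) * Real.log n)))
    (hνn : νn = Real.log (βm / αm) +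
      Real.log (((n : ℝ) - (αp + αm) * Real.log n) / ((n : ℝ) - (βp + βm) * Real.log n)))
    (hμpos : 0 < μn) (hνpos : 0 < νn)
    (x : Fin n → ℝ) (hx : ∀ i, x i = 1 ∨ x i = -1) (hbal : ∑ i, x i = 0) :
    (∀ y : Fin n → ℝ, (∀ i, y i = 1 ∨ y i = -1) → ∑ i, y i = 0 →
        llhd A pp pm qp qm y ≤ llhd A pp pm qp qm x) ↔
    (∀ y : Fin n → ℝ, (∀ i, y i = 1 ∨ y i = -1) → ∑ i, y i = 0 →
        y ⬝ᵥ (μn • (Matrix.of fun i j => max (A i j) 0)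
                - νn • (Matrix.of fun i j => max (-(A i j)) 0)).mulVec y ≤
        x ⬝ᵥ (μn • (Matrix.of fun i j => max (A i j) 0)
                - νn • (Matrix.of fun i j => max (-(A i j)) 0)).mulVec x) := by
  classical
  set M : Matrix (Fin n) (Fin n) ℝ :=
    μn • (Matrix.of fun i j => max (A i j) 0)
      - νn • (Matrix.of fun i j => max (-(A i j)) 0) with hMdef
  have hn0 : (0:ℝ) < n := by positivity
  have h1n : (1:ℝ) < n := by
    have : (2:ℝ) ≤ n := by exact_mod_cast hn
    linarith
  have hlogn : 0 < Real.log n := Real.log_pos h1n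
  have hαp0 : 0 < αp := hβp.trans hαp
  have hβm0 : 0 < βm := hαm.trans hβm
  have hpp0 : 0 < pp := by rw [hpp]; exact div_pos (mul_pos hαp0 hlogn) hn0
  have hpm0 : 0 < pm := by rw [hpm]; exact div_pos (mul_pos hαm hlogn) hn0
  have hqp0 : 0 < qp := by rw [hqp]; exact div_pos (mul_pos hβp hlogn) hn0
  have hqm0 : 0 < qm := by rw [hqm]; exact div_pos (mul_pos hβm0 hlogn) hn0
  have e1 : 1 - pp - pm = ((n:ℝ) - (αp + αm) * Real.log n) / n := by
    rw [hpp, hpm]; field_simp; ring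
  have e2 : 1 - qp - qm = ((n:ℝ) - (βp + βm) * Real.log n) / n := by
    rw [hqp, hqm]; field_simp; ring
  have h1p : 0 < 1 - pp - pm := by rw [e1]; exact div_pos hden1 hn0
  have h1q : 0 < 1 - qp - qm := by rw [e2]; exact div_pos hden2 hn0
  have hPpos : ∀ i j, 0 < Pfac A pp pm i j := by
    intro i j; unfold Pfac; split_ifs <;> assumption
  have hQpos : ∀ i j, 0 < Pfac A qp qm i j := by
    intro i j; unfold Pfac; split_ifs <;> assumption
  have hfac : ∀ (y : Fin n → ℝ) i j, 0 < llfac A pp pm qp qm y i j := by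
    intro y i j; rw [llfac_eq]; split_ifs
    · exact hPpos i j
    · exact hQpos i j
  have hLpos : ∀ y, 0 < llhd A pp pm qp qm y := by
    intro y
    unfold llhd
    refine Finset.prod_pos fun i _ => Finset.prod_pos fun j _ => ?_
    split_ifs
    · exact hfac y i j
    · exact one_pos
  -- matrix entries
  have hMapp : ∀ i j, M i j = μn * max (A i j) 0 - νn * max (-(A i j)) 0 := by
    intro i j
    simp [hMdef, Matrix.sub_apply, Matrix.smul_apply, smul_eq_mul]
  have hMsym : ∀ i j, M i j = M j i := by
    intro i j; rw [hMapp, hMapp, hsymm i j]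
  have hMdiag : ∀ i, M i i = 0 := by
    intro i; rw [hMapp, hdiag i]; norm_num
  set R : ℝ := ((n:ℝ) - (αp + αm) * Real.log n) / ((n:ℝ) - (βp + βm) * Real.log n)
    with hRdef
  have hRlog : Real.log (((n:ℝ) - (βp + βm) * Real.log n)
      / ((n:ℝ) - (αp + αm) * Real.log n)) = - Real.log R := by
    rw [hRdef, Real.log_div hden2.ne' hden1.ne', Real.log_div hden1.ne' hden2.ne']
    ring
  -- the key per-entry identity
  have hdd : ∀ i j, Real.log (Pfac A pp pm i j) - Real.log (Pfac A qp qm i j)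
      = M i j + Real.log R := by
    intro i j
    rcases hvals i j with h | h | h
    · have h1 : Pfac A pp pm i j = pp := by simp [Pfac, h]
      have h2 : Pfac A qp qm i j = qp := by simp [Pfac, h]
      rw [h1, h2, hMapp, h]
      have hm1 : max (1:ℝ) 0 = 1 := by norm_num
      have hm2 : max (-(1:ℝ)) 0 = 0 := by norm_num
      rw [hm1, hm2]
      have hr : pp / qp = αp / βp := by
        rw [hpp, hqp]; field_simp
      have : Real.log pp - Real.log qp = Real.log (αp / βp) := by
        rw [← Real.log_div hpp0.ne' hqp0.ne', hr]
      rw [this, hμn, hRlog]; ring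
    · have h1 : Pfac A pp pm i j = pm := by norm_num [Pfac, h]
      have h2 : Pfac A qp qm i j = qm := by norm_num [Pfac, h]
      rw [h1, h2, hMapp, h]
      have hm1 : max (-1:ℝ) 0 = 0 := by norm_num
      have hm2 : max (-(-1:ℝ)) 0 = 1 := by norm_num
      rw [hm1, hm2]
      have hr : qm / pm = βm / αm := by
        rw [hpm, hqm]; field_simp
      have h3 : Real.log qm - Real.log pm = Real.log (βm / αm) := by
        rw [← Real.log_div hqm0.ne' hpm0.ne', hr]
      have h4 : νn = Real.log (βm / αm) + Real.log R := by rw [hνn, hRdef]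
      linarith
    · have h1 : Pfac A pp pm i j = 1 - pp - pm := by norm_num [Pfac, h]
      have h2 : Pfac A qp qm i j = 1 - qp - qm := by norm_num [Pfac, h]
      rw [h1, h2, hMapp, h]
      have hm1 : max (0:ℝ) 0 = 0 := by norm_num
      have hm2 : max (-(0:ℝ)) 0 = 0 := by norm_num
      rw [hm1, hm2, e1, e2]
      rw [Real.log_div hden1.ne' hn0.ne', Real.log_div hden2.ne' hn0.ne',
        hRdef, Real.log_div hden1.ne' hden2.ne']
      ring
  -- the key formula for log-likelihood
  have hlog_eq : ∀ y : Fin n → ℝ, (∀ i, y i = 1 ∨ y i = -1) → ∑ i, y i = 0 →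
      Real.log (llhd A pp pm qp qm y)
        = (∑ i, ∑ j, if i < j then
            (Real.log (Pfac A pp pm i j) + Real.log (Pfac A qp qm i j)) / 2 else 0)
          - (n:ℝ) * Real.log R / 4 + (1/4) * (y ⬝ᵥ M.mulVec y) := by
    intro y hy hb
    have h1 : Real.log (llhd A pp pm qp qm y)
        = ∑ i, ∑ j, if i < j then Real.log (llfac A pp pm qp qm y i j) else 0 := by
      unfold llhd
      rw [Real.log_prod (fun i _ =>
        (Finset.prod_pos fun j _ => by
          split_ifs
          · exact hfac y i j
          · exact one_pos).ne')]
      refine Finset.sum_congr rfl fun i _ => ?_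
      rw [Real.log_prod (fun j _ => by
        split_ifs
        · exact (hfac y i j).ne'
        · exact one_ne_zero)]
      refine Finset.sum_congr rfl fun j _ => ?_
      split_ifs <;> simp
    have h2 : ∀ i j, Real.log (llfac A pp pm qp qm y i j)
        = (Real.log (Pfac A pp pm i j) + Real.log (Pfac A qp qm i j)) / 2
          + ((M i j + Real.log R) / 2) * (y i * y j) := by
      intro i j
      have hy2 : y i * y j = 1 ∨ y i * y j = -1 := by
        rcases hy i with h | h <;> rcases hy j with h' | h' <;> rw [h, h'] <;> norm_num
      rcases hy2 with h | h
      · rw [llfac_eq, if_pos h, h]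
        have := hdd i j; linarith
      · rw [llfac_eq, if_neg (by rw [h]; norm_num), h]
        have := hdd i j; nlinarith [hdd i j]
    have hQform : y ⬝ᵥ M.mulVec y = ∑ i, ∑ j, M i j * (y i * y j) := by
      simp only [dotProduct, Matrix.mulVec, Finset.mul_sum]
      exact Finset.sum_congr rfl fun i _ => Finset.sum_congr rfl fun j _ => by ring
    have htri : ∑ i, ∑ j, M i j * (y i * y j)
        = 2 * ∑ i, ∑ j, if i < j then M i j * (y i * y j) else 0 := by
      refine sum_lt_of_symm _ (fun i j => ?_) (fun i => ?_)
      · rw [hMsym i j]; ring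
      · rw [hMdiag i]; ring
    have hpair : ∑ i, ∑ j, (if i < j then y i * y j else 0) = -(n:ℝ) / 2 := by
      have ht := sum_tri_decomp (fun i j => y i * y j)
      have hall : ∑ i, ∑ j, y i * y j = 0 := by
        rw [← Finset.sum_mul_sum, hb]; ring
      have hdg : ∑ i : Fin n, y i * y i = (n:ℝ) := by
        have : ∀ i : Fin n, y i * y i = 1 := by
          intro i; rcases hy i with h | h <;> rw [h] <;> norm_num
        simp [this]
      have hsw : (∑ i, ∑ j, if j < i then y i * y j else 0)
          = ∑ i, ∑ j, if i < j then y i * y j else 0 := by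
        rw [Finset.sum_comm]
        exact Finset.sum_congr rfl fun i _ => Finset.sum_congr rfl fun j _ => by
          split_ifs <;> ring
      rw [hall, hsw, hdg] at ht
      linarith
    have hexp : ∀ i j, ((M i j + Real.log R) / 2) * (y i * y j)
        = (1/2) * (M i j * (y i * y j)) + (Real.log R / 2) * (y i * y j) := by
      intro i j; ring
    calc Real.log (llhd A pp pm qp qm y)
        = ∑ i, ∑ j, if i < j then
            ((Real.log (Pfac A pp pm i j) + Real.log (Pfac A qp qm i j)) / 2
              + ((M i j + Real.log R) / 2) * (y i * y j)) else 0 := by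
          rw [h1]
          refine Finset.sum_congr rfl fun i _ => Finset.sum_congr rfl fun j _ => ?_
          split_ifs with hij
          · exact h2 i j
          · rfl
      _ = (∑ i, ∑ j, if i < j then
            (Real.log (Pfac A pp pm i j) + Real.log (Pfac A qp qm i j)) / 2 else 0)
          + ∑ i, ∑ j, if i < j then ((M i j + Real.log R) / 2) * (y i * y j) else 0 :=
          sum_ite_add _ _
      _ = (∑ i, ∑ j, if i < j then
            (Real.log (Pfac A pp pm i j) + Real.log (Pfac A qp qm i j)) / 2 else 0)
          + ((1/2) * ∑ i, ∑ j, (if i < j then M i j * (y i * y j) else 0)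
            + (Real.log R / 2) * ∑ i, ∑ j, (if i < j then y i * y j else 0)) := by
          congr 1
          calc (∑ i, ∑ j, if i < j then ((M i j + Real.log R) / 2) * (y i * y j) else 0)
              = ∑ i, ∑ j, if i < j then ((1/2) * (M i j * (y i * y j))
                  + (Real.log R / 2) * (y i * y j)) else 0 :=
                Finset.sum_congr rfl fun i _ => Finset.sum_congr rfl fun j _ => by
                  split_ifs with hij
                  · exact hexp i j
                  · rfl
            _ = _ := by rw [sum_ite_add, sum_ite_mul, sum_ite_mul]
      _ = _ := by
          rw [hpair]
          have : (∑ i, ∑ j, if i < j then M i j * (y i * y j) else 0)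
              = (y ⬝ᵥ M.mulVec y) / 2 := by rw [hQform] at *; linarith [htri]
          rw [this]; ring
  -- finish
  constructor
  · intro h y hy hby
    have hle := h y hy hby
    have hlog : Real.log (llhd A pp pm qp qm y) ≤ Real.log (llhd A pp pm qp qm x) :=
      Real.log_le_log (hLpos y) hle
    have h1 := hlog_eq y hy hby
    have h2 := hlog_eq x hx hbal
    rw [h1, h2] at hlog
    linarith
  · intro h y hy hby
    have hle := h y hy hby
    have h1 := hlog_eq y hy hby
    have h2 := hlog_eq x hx hbal
    have hlog : Real.log (llhd A pp pm qp qm y) ≤ Real.log (llhd A pp pm qp qm x) := by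
      rw [h1, h2]; linarith
    exact (Real.log_le_log_iff (hLpos y) (hLpos x)).mp hlog
end
end

section
/- Suppose A is drawn from SSBM(n,x*,p⁺,p⁻,q⁺,q⁻) under Assumption 1, and let ρ = 1ᵀÃ1/n². Then E[ρ] = ((p⁺+q⁺) − ξ(p⁻+q⁻))/2 − (p⁺ − ξp⁻)/n, and with probability at least 1 − 2n^{−1/(2(α⁺+β⁺+1))} − 2n^{−1/(2(α⁻+β⁻+1))} one has |ρ − E[ρ]| ≤ (1+ξ)·log n / n^{3/2}. -/
open MeasureTheory ProbabilityTheory Matrix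

noncomputable section

/-- Entrywise positive part `A⁺` of a matrix. -/
def aPos {n : ℕ} (A : Matrix (Fin n) (Fin n) ℝ) : Matrix (Fin n) (Fin n) ℝ :=
  Matrix.of fun i j => max (A i j) 0

/-- Entrywise negative part `A⁻` of a matrix. -/
def aNeg {n : ℕ} (A : Matrix (Fin n) (Fin n) ℝ) : Matrix (Fin n) (Fin n) ℝ :=
  Matrix.of fun i j => max (-(A i j)) 0

/-- Euclidean norm of a vector in `ℝⁿ`. -/
def vnorm {n : ℕ} (v : Fin n → ℝ) : ℝ := Real.sqrt (∑ i, v i ^ 2)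

/-- Entrywise sign of a vector: `1` on nonnegative entries, `-1` otherwise. -/
def signVec {n : ℕ} (v : Fin n → ℝ) : Fin n → ℝ := fun i => if 0 ≤ v i then 1 else -1

/-- Real cube root. -/
def cbrt (x : ℝ) : ℝ := if 0 ≤ x then x ^ ((1 : ℝ)/3) else -((-x) ^ ((1 : ℝ)/3))

/-- The signed stochastic block model `SSBM(n, xs, pp, pm, qp, qm)`:
`A` is a random symmetric `{-1,0,1}`-matrix with zero diagonal, whose upper triangular
entries are independent, equal to `1` (resp. `-1`) with probability `pp` (resp. `pm`)
within communities and `qp` (resp. `qm`) across communities, relative to the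
community label vector `xs ∈ {±1}ⁿ` with `1ᵀ xs = 0`. -/
structure IsSSBM {Ω : Type} [MeasurableSpace Ω] (P : Measure Ω)
    {n : ℕ} (xs : Fin n → ℝ) (pp pm qp qm : ℝ)
    (A : Ω → Matrix (Fin n) (Fin n) ℝ) : Prop where
  pp_pos : 0 < pp
  pm_pos : 0 < pm
  qp_pos : 0 < qp
  qm_pos : 0 < qm
  p_sum_le : pp + pm ≤ 1
  q_sum_le : qp + qm ≤ 1
  labels : ∀ i, xs i = 1 ∨ xs i = -1
  balanced : ∑ i, xs i = 0
  meas : ∀ i j, Measurable fun ω => A ω i j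
  symm : ∀ ω i j, A ω i j = A ω j i
  diag : ∀ ω i, A ω i i = 0
  vals : ∀ ω i j, A ω i j = 1 ∨ A ω i j = -1 ∨ A ω i j = 0
  indep : iIndepFun
      (fun (p : {p : Fin n × Fin n // p.1 < p.2}) ω => A ω p.1.1 p.1.2) P
  probIn : ∀ i j : Fin n, i < j → xs i * xs j = 1 →
      P {ω | A ω i j = 1} = ENNReal.ofReal pp ∧ P {ω | A ω i j = -1} = ENNReal.ofReal pm
  probOut : ∀ i j : Fin n, i < j → xs i * xs j = -1 →
      P {ω | A ω i j = 1} = ENNReal.ofReal qp ∧ P {ω | A ω i j = -1} = ENNReal.ofReal qm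

/-- Sum of the strictly upper triangular entries of a matrix. -/
def upperSum {n : ℕ} (M : Matrix (Fin n) (Fin n) ℝ) : ℝ :=
  ∑ i, ∑ j, if i < j then M i j else 0

/-- The all-ones `n × n` matrix. -/
def Jmat (n : ℕ) : Matrix (Fin n) (Fin n) ℝ := Matrix.of fun _ _ => 1

/-- The weight `ξ = log(β⁻/α⁻)/log(α⁺/β⁺)`. -/
def xiOf (αp βp αm βm : ℝ) : ℝ := Real.log (βm / αm) / Real.log (αp / βp)

/-- `Ã = A⁺ - ξ A⁻`. -/
def Atil {Ω : Type} {n : ℕ} (ξ : ℝ) (A : Ω → Matrix (Fin n) (Fin n) ℝ) (ω : Ω) :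
    Matrix (Fin n) (Fin n) ℝ := aPos (A ω) - ξ • aNeg (A ω)

/-- `ρ = 1ᵀ Ã 1 / n²`. -/
def rhoOf {Ω : Type} {n : ℕ} (ξ : ℝ) (A : Ω → Matrix (Fin n) (Fin n) ℝ) (ω : Ω) : ℝ :=
  (∑ i, ∑ j, Atil ξ A ω i j) / (n : ℝ) ^ 2

/-- `W = Ã - ρ J`. -/
def Wof {Ω : Type} {n : ℕ} (ξ : ℝ) (A : Ω → Matrix (Fin n) (Fin n) ℝ) (ω : Ω) :
    Matrix (Fin n) (Fin n) ℝ := Atil ξ A ω - rhoOf ξ A ω • Jmat n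

/-- `μ` is an eigenvalue of the matrix `M`. -/
def IsEigenvalue {n : ℕ} (M : Matrix (Fin n) (Fin n) ℝ) (μ : ℝ) : Prop :=
  ∃ v : Fin n → ℝ, v ≠ 0 ∧ M.mulVec v = μ • v

/-- The ℓ₂ operator (spectral) norm of a real square matrix. -/
def specNorm {n : ℕ} (M : Matrix (Fin n) (Fin n) ℝ) : ℝ :=
  ‖Matrix.toEuclideanCLM (𝕜 := ℝ) M‖

/-- Entrywise expectation of a random matrix. -/
def Emat {Ω : Type} [MeasurableSpace Ω] (P : Measure Ω) {n : ℕ}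
    (M : Ω → Matrix (Fin n) (Fin n) ℝ) : Matrix (Fin n) (Fin n) ℝ :=
  Matrix.of fun i j => ∫ ω, M ω i j ∂P

/-! Since `Ã` is symmetric with zero diagonal, `ρ = 2 (S⁺ - ξ S⁻) / n²`, where `S⁺` and `S⁻`
count the positive and negative entries above the diagonal. Each of them is a sum of
independent Bernoulli variables, with mean `(p n (n - 2) + q n²) / 4`; this gives `E[ρ]`.
A Chernoff bound with `e^t - 1 - t ≤ t² / 2 + 2 t³ / 9` at `t = 2 / (√n s)`, `s = α + β + 1`,
shows that each of them leaves the window of half-width `√n log n / 2` around its mean with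
probability at most `2 n^(-1/(2s))`, and on both windows `|ρ - E[ρ]| ≤ (1 + ξ) log n / n^(3/2)`.
For `n ≤ 4` the claimed lower bound is not positive. -/

open Real

section Concentration

variable {Ω : Type*} [MeasurableSpace Ω] {P : Measure Ω} [IsProbabilityMeasure P]

lemma integrable_exp_mul_of_abs_le {Z : Ω → ℝ} (hZ : Measurable Z) {C : ℝ}
    (hC : ∀ ω, |Z ω| ≤ C) (t : ℝ) : Integrable (fun ω => exp (t * Z ω)) P := by
  refine Integrable.of_bound (hZ.const_mul t).exp.aestronglyMeasurable (exp (|t| * C)) <|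
    ae_of_all _ fun ω => ?_
  rw [Real.norm_eq_abs, abs_of_pos (exp_pos _), exp_le_exp]
  calc t * Z ω ≤ |t| * |Z ω| := (le_abs_self _).trans (abs_mul _ _).le
    _ ≤ |t| * C := by gcongr; exact hC ω

lemma mgf_le_of_zero_or_one {Y : Ω → ℝ} (hY : Measurable Y)
    (h01 : ∀ ω, Y ω = 0 ∨ Y ω = 1) (t : ℝ) : mgf Y P t ≤ exp ((exp t - 1) * P[Y]) := by
  have hlin : (fun ω => exp (t * Y ω)) = fun ω => 1 + (exp t - 1) * Y ω := by
    funext ω; rcases h01 ω with h | h <;> simp [h]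
  have hint : Integrable Y P := Integrable.of_bound hY.aestronglyMeasurable 1 <|
    ae_of_all _ fun ω => by rcases h01 ω with h | h <;> simp [h]
  rw [mgf, hlin, integral_add (integrable_const 1) (hint.const_mul _), integral_const_mul]
  simpa [add_comm] using add_one_le_exp ((exp t - 1) * P[Y])

lemma measureReal_abs_le_ge_of_tails {Z X Y : Ω → ℝ} {c ξ u : ℝ} (hc : 0 ≤ c)
    (hξ : 0 ≤ ξ) (hZ : ∀ ω, Z ω = c * (X ω - ξ * Y ω)) :
    1 - P.real {ω | u ≤ |X ω|} - P.real {ω | u ≤ |Y ω|} ≤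
      P.real {ω | |Z ω| ≤ c * ((1 + ξ) * u)} := by
  set S := {ω | |Z ω| ≤ c * ((1 + ξ) * u)}
  have hcompl : Sᶜ ⊆ {ω | u ≤ |X ω|} ∪ {ω | u ≤ |Y ω|} := by
    intro ω hω
    by_contra h
    simp only [Set.mem_union, Set.mem_ofPred_eq, not_or, not_le] at h
    refine hω ?_
    show |Z ω| ≤ _
    rw [hZ, abs_mul, abs_of_nonneg hc]
    gcongr
    calc |X ω - ξ * Y ω| ≤ |X ω| + ξ * |Y ω| :=
          (abs_sub _ _).trans_eq (by rw [abs_mul, abs_of_nonneg hξ])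
      _ ≤ (1 + ξ) * u := by nlinarith
  have hone : 1 ≤ P.real S + P.real Sᶜ := by
    simpa [Set.union_compl_self] using measureReal_union_le (μ := P) S Sᶜ
  linarith [measureReal_mono (μ := P) hcompl, measureReal_union_le (μ := P) {ω | u ≤ |X ω|}
    {ω | u ≤ |Y ω|}]

variable {ι : Type*} [Fintype ι] {Y : ι → Ω → ℝ}

lemma mgf_sum_sub_integral_le (hY : ∀ i, Measurable (Y i)) (hind : iIndepFun Y P)
    (h01 : ∀ i ω, Y i ω = 0 ∨ Y i ω = 1) (t : ℝ) :
    mgf (fun ω => ∑ i, (Y i ω - P[Y i])) P t ≤ exp ((∑ i, P[Y i]) * (exp t - 1 - t)) := by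
  have hcent : iIndepFun (fun i ω => Y i ω + -P[Y i]) P := by
    have := hind.comp (fun i x => x + -P[Y i]) fun i => measurable_id.add_const _
    exact this
  have hsum : (fun ω => ∑ i, (Y i ω - P[Y i])) = ∑ i, fun ω => Y i ω + -P[Y i] := by
    funext ω; simp [Finset.sum_apply, sub_eq_add_neg]
  rw [hsum, hcent.mgf_sum (fun i => (hY i).add_const _), Finset.sum_mul, exp_sum]
  refine Finset.prod_le_prod (fun i _ => mgf_nonneg) fun i _ => ?_
  calc mgf (fun ω => Y i ω + -P[Y i]) P t = mgf (Y i) P t * exp (t * -P[Y i]) :=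
        mgf_add_const _
    _ ≤ exp ((exp t - 1) * P[Y i]) * exp (t * -P[Y i]) := by
        gcongr; exact mgf_le_of_zero_or_one (hY i) (h01 i) t
    _ = exp (P[Y i] * (exp t - 1 - t)) := by rw [← exp_add]; ring_nf

/-- Both tails are controlled by the upper one, since `exp (-t) + t ≤ exp t - t` for `t ≥ 0`. -/
lemma measureReal_le_abs_sum_sub_integral_le (hY : ∀ i, Measurable (Y i))
    (hind : iIndepFun Y P) (h01 : ∀ i ω, Y i ω = 0 ∨ Y i ω = 1) {t : ℝ} (ht : 0 ≤ t)
    (u : ℝ) :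
    P.real {ω | u ≤ |∑ i, (Y i ω - P[Y i])|} ≤
      2 * exp ((∑ i, P[Y i]) * (exp t - 1 - t) - t * u) := by
  set X : Ω → ℝ := fun ω => ∑ i, (Y i ω - P[Y i])
  set m := ∑ i, P[Y i]
  have hm : 0 ≤ m := Finset.sum_nonneg fun i _ =>
    integral_nonneg fun ω => by rcases h01 i ω with h | h <;> simp [h]
  have hX : Measurable X := Finset.measurable_sum _ fun i _ => (hY i).sub_const _
  have hbdd : ∀ ω, |X ω| ≤ ∑ i, (1 + |P[Y i]|) := fun ω =>
    (Finset.abs_sum_le_sum_abs _ _).trans <| Finset.sum_le_sum fun i _ =>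
      (abs_sub _ _).trans <| by gcongr; rcases h01 i ω with h | h <;> simp [h]
  have hsinh : exp (-t) - 1 - -t ≤ exp t - 1 - t := by
    have := Real.self_le_sinh_iff.2 ht
    rw [Real.sinh_eq] at this
    linarith
  have hsplit : exp (m * (exp t - 1 - t) - t * u) = exp (-t * u) * exp (m * (exp t - 1 - t)) := by
    rw [← exp_add]; ring_nf
  have hupper : P.real {ω | u ≤ X ω} ≤ exp (m * (exp t - 1 - t) - t * u) :=
    calc P.real {ω | u ≤ X ω} ≤ exp (-t * u) * mgf X P t :=
          measure_ge_le_exp_mul_mgf u ht (integrable_exp_mul_of_abs_le hX hbdd t)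
      _ ≤ _ := hsplit ▸ by gcongr; exact mgf_sum_sub_integral_le hY hind h01 t
  have hlower : P.real {ω | X ω ≤ -u} ≤ exp (m * (exp t - 1 - t) - t * u) :=
    calc P.real {ω | X ω ≤ -u} ≤ exp (-t * u) * mgf X P (-t) := by
          have := measure_le_le_exp_mul_mgf (μ := P) (-u) (neg_nonpos.2 ht)
            (integrable_exp_mul_of_abs_le hX hbdd (-t))
          rwa [neg_mul_neg] at this
      _ ≤ _ := hsplit ▸ by
          gcongr; exact (mgf_sum_sub_integral_le hY hind h01 (-t)).trans (by gcongr)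
  calc P.real {ω | u ≤ |X ω|} ≤ P.real ({ω | u ≤ X ω} ∪ {ω | X ω ≤ -u}) := by
        refine measureReal_mono fun ω hω => ?_
        rcases le_abs'.1 (show u ≤ |X ω| from hω) with h | h
        · exact Or.inr h
        · exact Or.inl h
    _ ≤ _ := (measureReal_union_le _ _).trans (by linarith)

lemma measureReal_le_abs_sum_sub_integral_le_exp_neg (hY : ∀ i, Measurable (Y i))
    (hind : iIndepFun Y P) (h01 : ∀ i ω, Y i ω = 0 ∨ Y i ω = 1) {R L s : ℝ} (hR : 2 ≤ R)
    (hL : 0 < L) (hs : 1 < s) (hm : ∑ i, P[Y i] ≤ R ^ 2 * L * (s - 1) / 4) :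
    P.real {ω | R * L / 2 ≤ |∑ i, (Y i ω - P[Y i])|} ≤ 2 * exp (-(L / (2 * s))) := by
  set t := 2 / (R * s)
  have hRs : 2 ≤ R * s := by nlinarith
  have ht0 : 0 ≤ t := by positivity
  have ht1 : t ≤ 1 := by rw [div_le_one (by positivity)]; exact hRs
  refine (measureReal_le_abs_sum_sub_integral_le hY hind h01 ht0 _).trans ?_
  gcongr
  have htaylor : exp t - 1 - t ≤ t ^ 2 / 2 * (1 + 4 * t / 9) := by
    have := Real.exp_bound' ht0 ht1 (n := 3) (by norm_num)
    norm_num [Finset.sum_range_succ, Nat.factorial] at this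
    linarith
  have hRt : R * t = 2 / s := by simp only [t]; field_simp
  have hts : t * s ≤ 1 := by
    simp only [t]; rw [div_mul_eq_mul_div, div_le_one (by positivity)]; nlinarith
  have hg0 : 0 ≤ exp t - 1 - t := by linarith [add_one_le_exp t]
  have hs0 : 0 < s := by linarith
  calc (∑ i, P[Y i]) * (exp t - 1 - t) - t * (R * L / 2)
      ≤ R ^ 2 * L * (s - 1) / 4 * (t ^ 2 / 2 * (1 + 4 * t / 9)) - t * (R * L / 2) := by
        gcongr
    _ = L / (2 * s ^ 2) * ((s - 1) * (1 + 4 * t / 9) - s) - L / (2 * s) := by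
        rw [show R ^ 2 * L * (s - 1) / 4 * (t ^ 2 / 2 * (1 + 4 * t / 9)) - t * (R * L / 2)
          = (R * t) ^ 2 * L * (s - 1) / 8 * (1 + 4 * t / 9) - R * t * L / 2 by ring, hRt]
        field_simp
        ring
    _ ≤ -(L / (2 * s)) := by
        have : (s - 1) * (1 + 4 * t / 9) - s ≤ 0 := by nlinarith
        nlinarith [mul_nonpos_of_nonneg_of_nonpos (by positivity : 0 ≤ L / (2 * s ^ 2)) this]

end Concentration

lemma one_le_two_mul_rpow_neg_inv {x s : ℝ} (hx1 : 1 ≤ x) (hx4 : x ≤ 4) (hs : 1 ≤ s) :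
    1 ≤ 2 * x ^ (-(1 / (2 * s))) := by
  have hhalf : (4 : ℝ) ^ (-(1 / 2 : ℝ)) = 1 / 2 := by
    rw [show (4 : ℝ) = 2 ^ (2 : ℝ) by norm_num, ← Real.rpow_mul (by norm_num)]
    norm_num
  calc 1 = 2 * (4 : ℝ) ^ (-(1 / 2 : ℝ)) := by rw [hhalf]; norm_num
    _ ≤ 2 * (4 : ℝ) ^ (-(1 / (2 * s))) := mul_le_mul_of_nonneg_left
        (Real.rpow_le_rpow_of_exponent_le (by norm_num)
          (neg_le_neg (one_div_le_one_div_of_le two_pos (by linarith)))) zero_le_two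
    _ ≤ 2 * x ^ (-(1 / (2 * s))) := mul_le_mul_of_nonneg_left
        (Real.rpow_le_rpow_of_nonpos (by linarith) hx4 (neg_nonpos.2 (by positivity))) zero_le_two

abbrev UpperPair (n : ℕ) := {p : Fin n × Fin n // p.1 < p.2}

section UpperSum

variable {n : ℕ}

lemma sum_upperPair_eq_upperSum (M : Matrix (Fin n) (Fin n) ℝ) :
    ∑ p : UpperPair n, M p.1.1 p.1.2 = upperSum M := by
  rw [← Finset.sum_subtype (Finset.univ.filter fun q : Fin n × Fin n => q.1 < q.2) (by simp)
    (fun q => M q.1 q.2), Finset.sum_filter, ← Finset.univ_product_univ, Finset.sum_product,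
    upperSum]

lemma upperSum_add (M N : Matrix (Fin n) (Fin n) ℝ) :
    upperSum (M + N) = upperSum M + upperSum N := by
  simp only [← sum_upperPair_eq_upperSum, Matrix.add_apply, Finset.sum_add_distrib]

lemma upperSum_sub (M N : Matrix (Fin n) (Fin n) ℝ) :
    upperSum (M - N) = upperSum M - upperSum N := by
  simp only [← sum_upperPair_eq_upperSum, Matrix.sub_apply, Finset.sum_sub_distrib]

lemma upperSum_smul (c : ℝ) (M : Matrix (Fin n) (Fin n) ℝ) :
    upperSum (c • M) = c * upperSum M := by
  simp only [← sum_upperPair_eq_upperSum, Matrix.smul_apply, smul_eq_mul, Finset.mul_sum]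

lemma sum_entries_eq_two_mul_upperSum_add_trace {M : Matrix (Fin n) (Fin n) ℝ} (hM : M.IsSymm) :
    ∑ i, ∑ j, M i j = 2 * upperSum M + M.trace := by
  have hsplit : ∀ i j, M i j = (if i < j then M i j else 0) + (if j < i then M j i else 0) +
      (if i = j then M i j else 0) := by
    intro i j
    rcases lt_trichotomy i j with h | rfl | h
    · simp [h, h.ne, h.not_gt]
    · simp
    · simp [h, h.ne', h.not_gt, hM.apply i j]
  rw [Finset.sum_congr rfl fun i _ => Finset.sum_congr rfl fun j _ => hsplit i j]
  simp only [Finset.sum_add_distrib]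
  rw [Finset.sum_comm (f := fun i j => if j < i then M j i else 0)]
  simp [upperSum, Matrix.trace, two_mul]

lemma upperSum_Jmat : upperSum (Jmat n) = ((n : ℝ) ^ 2 - n) / 2 := by
  have h := sum_entries_eq_two_mul_upperSum_add_trace (M := Jmat n)
    (Matrix.IsSymm.ext fun _ _ => rfl)
  have hentries : ∑ i, ∑ j, Jmat n i j = (n : ℝ) ^ 2 := by simp [Jmat, sq]
  have htrace : (Jmat n).trace = n := by simp [Jmat, Matrix.trace]
  linarith

lemma upperSum_vecMulVec_self {xs : Fin n → ℝ} (hlab : ∀ i, xs i = 1 ∨ xs i = -1)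
    (hbal : ∑ i, xs i = 0) : upperSum (vecMulVec xs xs) = -(n / 2) := by
  have h := sum_entries_eq_two_mul_upperSum_add_trace (M := vecMulVec xs xs)
    (Matrix.IsSymm.ext fun i j => by simp [vecMulVec_apply, mul_comm])
  have hsq : ∀ i, xs i * xs i = 1 := fun i => by rcases hlab i with h | h <;> simp [h]
  simp only [vecMulVec_apply, ← Finset.sum_mul_sum, hbal, mul_zero, Matrix.trace, Matrix.diag,
    hsq, Finset.sum_const, Finset.card_univ, Fintype.card_fin, nsmul_eq_mul, mul_one] at h
  linarith

end UpperSum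

lemma aNeg_eq_aPos_neg {n : ℕ} (M : Matrix (Fin n) (Fin n) ℝ) : aNeg M = aPos (-M) := rfl

/-- A balanced two-community partition of `n` vertices has `n (n - 2) / 4` pairs `i < j` inside a
community and `n ^ 2 / 4` across. -/
def expectedEdgeCount (n : ℕ) (p q : ℝ) : ℝ :=
  (p * ((n : ℝ) ^ 2 - 2 * n) + q * (n : ℝ) ^ 2) / 4

lemma expectedEdgeCount_le {n : ℕ} (hn : 0 < n) {α β L : ℝ} (hα : 0 ≤ α) (hL : 0 ≤ L) :
    expectedEdgeCount n (α * L / n) (β * L / n) ≤ n * L * (α + β) / 4 := by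
  have hn' : (0 : ℝ) < n := Nat.cast_pos.2 hn
  have : expectedEdgeCount n (α * L / n) (β * L / n) = n * L * (α + β) / 4 - α * L / 2 := by
    unfold expectedEdgeCount; field_simp; ring
  rw [this]; linarith [mul_nonneg hα hL]

lemma two_mul_sub_expectedEdgeCount_div_sq {n : ℕ} (hn : n ≠ 0) (pp pm qp qm ξ : ℝ) :
    2 * (expectedEdgeCount n pp qp - ξ * expectedEdgeCount n pm qm) / n ^ 2 =
      ((pp + qp) - ξ * (pm + qm)) / 2 - (pp - ξ * pm) / n := by
  unfold expectedEdgeCount; field_simp; ring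

namespace IsSSBM

variable {Ω : Type} [MeasurableSpace Ω] {P : Measure Ω} {n : ℕ} {xs : Fin n → ℝ}
  {pp pm qp qm : ℝ} {A : Ω → Matrix (Fin n) (Fin n) ℝ}

theorem neg (hA : IsSSBM P xs pp pm qp qm A) : IsSSBM P xs pm pp qm qp (fun ω => -A ω) where
  pp_pos := hA.pm_pos
  pm_pos := hA.pp_pos
  qp_pos := hA.qm_pos
  qm_pos := hA.qp_pos
  p_sum_le := by linarith [hA.p_sum_le]
  q_sum_le := by linarith [hA.q_sum_le]
  labels := hA.labels
  balanced := hA.balanced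
  meas i j := (hA.meas i j).neg
  symm ω i j := by simp [hA.symm ω i j]
  diag ω i := by simp [hA.diag ω i]
  vals ω i j := by rcases hA.vals ω i j with h | h | h <;> simp [h]
  indep := hA.indep.comp (fun _ x => -x) fun _ => measurable_neg
  probIn i j hij h := by simpa [neg_eq_iff_eq_neg, and_comm] using hA.probIn i j hij h
  probOut i j hij h := by simpa [neg_eq_iff_eq_neg, and_comm] using hA.probOut i j hij h

lemma labels_mul (hA : IsSSBM P xs pp pm qp qm A) (i j : Fin n) :
    xs i * xs j = 1 ∨ xs i * xs j = -1 := by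
  rcases hA.labels i with hi | hi <;> rcases hA.labels j with hj | hj <;> simp [hi, hj]

lemma aPos_eq_zero_or_one (hA : IsSSBM P xs pp pm qp qm A) (ω : Ω) (i j : Fin n) :
    aPos (A ω) i j = 0 ∨ aPos (A ω) i j = 1 := by
  rcases hA.vals ω i j with h | h | h <;> simp [aPos, h]

lemma measurable_aPos (hA : IsSSBM P xs pp pm qp qm A) (i j : Fin n) :
    Measurable fun ω => aPos (A ω) i j :=
  (hA.meas i j).max measurable_const

lemma iIndepFun_aPos (hA : IsSSBM P xs pp pm qp qm A) :
    iIndepFun (fun (p : UpperPair n) ω => aPos (A ω) p.1.1 p.1.2) P :=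
  hA.indep.comp (fun _ x => max x 0) fun _ => measurable_id.max measurable_const

lemma integral_aPos (hA : IsSSBM P xs pp pm qp qm A) {i j : Fin n} (hij : i < j) :
    ∫ ω, aPos (A ω) i j ∂P =
      (((pp + qp) / 2) • Jmat n + ((pp - qp) / 2) • vecMulVec xs xs) i j := by
  have hind : (fun ω => aPos (A ω) i j) = {ω | A ω i j = 1}.indicator 1 := by
    funext ω
    rcases hA.vals ω i j with h | h | h <;> norm_num [aPos, Set.indicator, h]
  have hmeas : MeasurableSet {ω | A ω i j = 1} := hA.meas i j (measurableSet_singleton 1)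
  rw [hind, integral_indicator_one hmeas, measureReal_def]
  simp only [Matrix.add_apply, Matrix.smul_apply, Jmat, Matrix.of_apply, vecMulVec_apply,
    smul_eq_mul]
  rcases hA.labels_mul i j with h | h
  · rw [(hA.probIn i j hij h).1, ENNReal.toReal_ofReal hA.pp_pos.le, h]; ring
  · rw [(hA.probOut i j hij h).1, ENNReal.toReal_ofReal hA.qp_pos.le, h]; ring

lemma sum_integral_aPos (hA : IsSSBM P xs pp pm qp qm A) :
    ∑ p : UpperPair n, ∫ ω, aPos (A ω) p.1.1 p.1.2 ∂P = expectedEdgeCount n pp qp := by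
  rw [Finset.sum_congr rfl fun p _ => hA.integral_aPos p.2, sum_upperPair_eq_upperSum,
    upperSum_add, upperSum_smul, upperSum_smul, upperSum_Jmat,
    upperSum_vecMulVec_self hA.labels hA.balanced, expectedEdgeCount]
  ring

lemma integrable_aPos [IsFiniteMeasure P] (hA : IsSSBM P xs pp pm qp qm A) (i j : Fin n) :
    Integrable (fun ω => aPos (A ω) i j) P :=
  .of_bound (hA.measurable_aPos i j).aestronglyMeasurable 1 <| ae_of_all _ fun ω => by
    rcases hA.aPos_eq_zero_or_one ω i j with h | h <;> simp [h]

lemma integrable_upperSum_aPos [IsFiniteMeasure P] (hA : IsSSBM P xs pp pm qp qm A) :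
    Integrable (fun ω => upperSum (aPos (A ω))) P := by
  simp only [← sum_upperPair_eq_upperSum]
  exact integrable_finsetSum _ fun p _ => hA.integrable_aPos p.1.1 p.1.2

lemma integral_upperSum_aPos [IsFiniteMeasure P] (hA : IsSSBM P xs pp pm qp qm A) :
    ∫ ω, upperSum (aPos (A ω)) ∂P = expectedEdgeCount n pp qp := by
  simp only [← sum_upperPair_eq_upperSum]
  rw [integral_finsetSum _ fun p _ => hA.integrable_aPos p.1.1 p.1.2, hA.sum_integral_aPos]

lemma measureReal_le_abs_upperSum_aPos_sub_le [IsProbabilityMeasure P]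
    (hA : IsSSBM P xs pp pm qp qm A) (hn : 4 < n) {α β : ℝ} (hα : 0 ≤ α) (hβ : 0 < β)
    (hpp : pp = α * log n / n) (hqp : qp = β * log n / n) :
    P.real {ω | √n * log n / 2 ≤ |upperSum (aPos (A ω)) - expectedEdgeCount n pp qp|} ≤
      2 * (n : ℝ) ^ (-(1 / (2 * (α + β + 1)))) := by
  have hn0 : (0 : ℝ) < n := Nat.cast_pos.2 (by omega)
  have hL : 0 < log n := Real.log_pos (by norm_cast; omega)
  have := measureReal_le_abs_sum_sub_integral_le_exp_neg
    (fun p : UpperPair n => hA.measurable_aPos p.1.1 p.1.2) hA.iIndepFun_aPos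
    (fun p ω => hA.aPos_eq_zero_or_one ω p.1.1 p.1.2) (R := √n)
    (Real.le_sqrt_of_sq_le (by norm_cast; omega)) hL (s := α + β + 1) (by linarith)
    (by rw [hA.sum_integral_aPos, Real.sq_sqrt hn0.le, add_sub_cancel_right, hpp, hqp]
        exact expectedEdgeCount_le (by omega) hα hL.le)
  rw [Real.rpow_def_of_pos hn0, mul_neg, mul_one_div]
  simpa only [Finset.sum_sub_distrib, sum_upperPair_eq_upperSum, hA.sum_integral_aPos] using this

lemma measureReal_le_abs_upperSum_aNeg_sub_le [IsProbabilityMeasure P]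
    (hA : IsSSBM P xs pp pm qp qm A) (hn : 4 < n) {α β : ℝ} (hα : 0 ≤ α) (hβ : 0 < β)
    (hpm : pm = α * log n / n) (hqm : qm = β * log n / n) :
    P.real {ω | √n * log n / 2 ≤ |upperSum (aNeg (A ω)) - expectedEdgeCount n pm qm|} ≤
      2 * (n : ℝ) ^ (-(1 / (2 * (α + β + 1)))) :=
  hA.neg.measureReal_le_abs_upperSum_aPos_sub_le hn hα hβ hpm hqm

lemma rhoOf_eq (hA : IsSSBM P xs pp pm qp qm A) (ξ : ℝ) (ω : Ω) :
    rhoOf ξ A ω = 2 * (upperSum (aPos (A ω)) - ξ * upperSum (aNeg (A ω))) / n ^ 2 := by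
  have hsymm : (Atil ξ A ω).IsSymm := Matrix.IsSymm.ext fun i j => by
    simp [Atil, aPos, aNeg, hA.symm ω i j]
  have htrace : (Atil ξ A ω).trace = 0 := Finset.sum_eq_zero fun i _ => by
    simp [Atil, aPos, aNeg, hA.diag ω i]
  rw [rhoOf, sum_entries_eq_two_mul_upperSum_add_trace hsymm, htrace, Atil, upperSum_sub,
    upperSum_smul, add_zero]

lemma integral_rhoOf [IsProbabilityMeasure P] (hA : IsSSBM P xs pp pm qp qm A) (ξ : ℝ)
    (hn : n ≠ 0) :
    ∫ ω, rhoOf ξ A ω ∂P = ((pp + qp) - ξ * (pm + qm)) / 2 - (pp - ξ * pm) / n := by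
  simp only [hA.rhoOf_eq, aNeg_eq_aPos_neg]
  rw [← two_mul_sub_expectedEdgeCount_div_sq hn, integral_div, integral_const_mul,
    integral_sub hA.integrable_upperSum_aPos (hA.neg.integrable_upperSum_aPos.const_mul ξ),
    integral_const_mul,
    hA.integral_upperSum_aPos, hA.neg.integral_upperSum_aPos]

lemma le_measureReal_abs_rhoOf_sub_le [IsProbabilityMeasure P]
    (hA : IsSSBM P xs pp pm qp qm A) {ξ : ℝ} (hξ : 0 ≤ ξ) (hn : n ≠ 0) (u : ℝ) :
    1 - P.real {ω | u ≤ |upperSum (aPos (A ω)) - expectedEdgeCount n pp qp|}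
        - P.real {ω | u ≤ |upperSum (aNeg (A ω)) - expectedEdgeCount n pm qm|} ≤
      P.real {ω | |rhoOf ξ A ω - (((pp + qp) - ξ * (pm + qm)) / 2 - (pp - ξ * pm) / n)| ≤
        2 / (n : ℝ) ^ 2 * ((1 + ξ) * u)} :=
  measureReal_abs_le_ge_of_tails (by positivity) hξ fun ω => by
    rw [hA.rhoOf_eq, ← two_mul_sub_expectedEdgeCount_div_sq hn]; ring

end IsSSBM

theorem stmt_6_general (αp βp αm βm : ℝ)
    (hβp : 0 < βp) (hαp : βp < αp) (hαm : 0 < αm) (hβm : αm < βm)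
    (n : ℕ) (hn : 2 ≤ n)
    (pp pm qp qm ξ : ℝ)
    (hpp : pp = αp * Real.log n / n) (hpm : pm = αm * Real.log n / n)
    (hqp : qp = βp * Real.log n / n) (hqm : qm = βm * Real.log n / n)
    (hξ : ξ = xiOf αp βp αm βm)
    (Ω : Type) (mΩ : MeasurableSpace Ω) (P : Measure Ω) (hP : IsProbabilityMeasure P)
    (xs : Fin n → ℝ) (A : Ω → Matrix (Fin n) (Fin n) ℝ)
    (hA : IsSSBM P xs pp pm qp qm A) :
    (∫ ω, rhoOf ξ A ω ∂P) = ((pp + qp) - ξ * (pm + qm)) / 2 - (pp - ξ * pm) / n ∧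
    (P {ω | |rhoOf ξ A ω - (((pp + qp) - ξ * (pm + qm)) / 2 - (pp - ξ * pm) / n)| ≤
        (1 + ξ) * Real.log n / (n : ℝ) ^ ((3 : ℝ) / 2)}).toReal ≥
      1 - 2 * (n : ℝ) ^ (-(1 / (2 * (αp + βp + 1))))
        - 2 * (n : ℝ) ^ (-(1 / (2 * (αm + βm + 1)))) := by
  have hn0 : (0 : ℝ) < n := Nat.cast_pos.2 (by omega)
  refine ⟨hA.integral_rhoOf ξ (by omega), ?_⟩
  rw [ge_iff_le, ← measureReal_def]
  rcases le_or_gt n 4 with hn4 | hn4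
  · have h1 := one_le_two_mul_rpow_neg_inv (x := n) (s := αp + βp + 1)
      (by exact_mod_cast (by omega : 1 ≤ n)) (by exact_mod_cast hn4) (by linarith)
    have h2 := Real.rpow_nonneg hn0.le (-(1 / (2 * (αm + βm + 1))))
    exact le_trans (by linarith) measureReal_nonneg
  have hξ0 : 0 ≤ ξ := hξ ▸ div_nonneg (Real.log_nonneg ((one_le_div hαm).2 hβm.le))
    (Real.log_nonneg ((one_le_div hβp).2 hαp.le))
  have hbound : 2 / (n : ℝ) ^ 2 * ((1 + ξ) * (√n * Real.log n / 2)) =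
      (1 + ξ) * Real.log n / (n : ℝ) ^ ((3 : ℝ) / 2) := by
    rw [show (3 : ℝ) / 2 = 1 + 1 / 2 by norm_num, Real.rpow_add hn0, Real.rpow_one,
      ← Real.sqrt_eq_rpow]
    field_simp
    rw [Real.sq_sqrt hn0.le]
  have key := hA.le_measureReal_abs_rhoOf_sub_le hξ0 (by omega) (√n * Real.log n / 2)
  rw [hbound] at key
  linarith [hA.measureReal_le_abs_upperSum_aPos_sub_le hn4 (hβp.trans hαp).le hβp hpp hqp,
    hA.measureReal_le_abs_upperSum_aNeg_sub_le hn4 hαm.le (hαm.trans hβm) hpm hqm]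

/-- Concentration of `ρ = 1ᵀÃ1/n²` where `Ã = A⁺ − ξA⁻`: under Assumption 1,
`E[ρ] = ((p⁺+q⁺) − ξ(p⁻+q⁻))/2 − (p⁺ − ξp⁻)/n`, and with probability at least
`1 − 2n^{−1/(2(α⁺+β⁺+1))} − 2n^{−1/(2(α⁻+β⁻+1))}` one has
`|ρ − E[ρ]| ≤ (1+ξ) log n / n^{3/2}`. -/
theorem stmt_6 (αp βp αm βm : ℝ)
    (hβp : 0 < βp) (hαp : βp < αp) (hαm : 0 < αm) (hβm : αm < βm)
    (n : ℕ) (hn : 2 ≤ n) (heven : Even n)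
    (pp pm qp qm ξ : ℝ)
    (hpp : pp = αp * Real.log n / n) (hpm : pm = αm * Real.log n / n)
    (hqp : qp = βp * Real.log n / n) (hqm : qm = βm * Real.log n / n)
    (hξ : ξ = xiOf αp βp αm βm)
    (Ω : Type) (mΩ : MeasurableSpace Ω) (P : Measure Ω) (hP : IsProbabilityMeasure P)
    (xs : Fin n → ℝ) (A : Ω → Matrix (Fin n) (Fin n) ℝ)
    (hA : IsSSBM P xs pp pm qp qm A) :
    (∫ ω, rhoOf ξ A ω ∂P) = ((pp + qp) - ξ * (pm + qm)) / 2 - (pp - ξ * pm) / n ∧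
    (P {ω | |rhoOf ξ A ω - (((pp + qp) - ξ * (pm + qm)) / 2 - (pp - ξ * pm) / n)| ≤
        (1 + ξ) * Real.log n / (n : ℝ) ^ ((3 : ℝ) / 2)}).toReal ≥
      1 - 2 * (n : ℝ) ^ (-(1 / (2 * (αp + βp + 1))))
        - 2 * (n : ℝ) ^ (-(1 / (2 * (αm + βm + 1)))) :=
  stmt_6_general αp βp αm βm hβp hαp hαm hβm n hn pp pm qp qm ξ hpp hpm hqp hqm hξ Ω mΩ P hP xs A hA
end
end
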